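/- arXiv:2312.12323 — 7 statements merged into one kernel-verified Lean document; each statement's English description precedes it below -/
import Mathlib

section
/- Let Φ*(x) = ∫ℝ log|λ − x| ρ_sc(dλ). Then for every x with |x| > 2, Φ*(x) = x²/4 − 1/2 − (|x|/4)√(x² − 4) + log((|x| + √(x² − 4))/2). -/
open MeasureTheory Real

/-- The semicircle distribution on `[-2, 2]`, with density `(1/(2π))√(4 - λ²)`. -/
noncomputable def semicircle : Measure ℝ :=
  volume.withDensity fun l => ENNReal.ofReal ((1 / (2 * π)) * Real.sqrt (4 - l ^ 2))

/-!
For `x > 2`, differentiation under the integral sign turns the derivative of the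
log-potential into the Stieltjes transform `∫ ρ(λ) / (x - λ) dλ = (x - √(x² - 4)) / 2`,
computed from an explicit antiderivative; this is also the derivative of the right-hand side,
so the two sides differ by a constant on `(2, ∞)`. Both are `log x + o(1)` as `x → ∞` (the
potential because `log (x - 2) ≤ log (x - λ) ≤ log (x + 2)` on the support), so the constant
vanishes. The case `x < -2` follows from the symmetry of the density.
-/

open intervalIntegral Filter Topology Set

section LogPotential

variable {f : ℝ → ℝ} {a b y : ℝ}

theorem continuousOn_log_sub_mul (hf : Continuous f) (hab : a ≤ b) (hy : b < y) :
    ContinuousOn (fun l => log (y - l) * f l) (uIcc a b) := by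
  refine (ContinuousOn.log (by fun_prop) fun t ht => ?_).mul hf.continuousOn
  rw [uIcc_of_le hab] at ht
  linarith [ht.2]

theorem hasDerivAt_integral_log_sub_mul (hf : Continuous f) (hab : a ≤ b) (hy : b < y) :
    HasDerivAt (fun x => ∫ l in a..b, log (x - l) * f l) (∫ l in a..b, f l / (y - l)) y := by
  obtain ⟨M, hM⟩ := isCompact_Icc.exists_bound_of_continuousOn (hf.continuousOn (s := Icc a b))
  set δ := (y - b) / 2 with hδ_def
  have hδ : 0 < δ := by linarith
  have gap : ∀ x ∈ Metric.ball y δ, ∀ t ∈ uIoc a b, δ < x - t := by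
    intro x hx t ht
    rw [uIoc_of_le hab] at ht
    linarith [(abs_lt.1 (mem_ball_iff_norm.1 hx)).1, ht.2]
  refine (hasDerivAt_integral_of_dominated_loc_of_deriv_le (μ := volume)
    (F := fun x l => log (x - l) * f l)
    (F' := fun x l => f l / (x - l)) (bound := fun _ => M / δ)
    (Metric.ball_mem_nhds y hδ) ?_ (continuousOn_log_sub_mul hf hab hy).intervalIntegrable ?_ ?_
    intervalIntegrable_const ?_).2
  · exact Eventually.of_forall fun x => (by fun_prop : Measurable _).aestronglyMeasurable
  · exact (by fun_prop : Measurable _).aestronglyMeasurable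
  · refine ae_of_all _ fun t ht x hx => ?_
    have hxt := gap x hx t ht
    rw [uIoc_of_le hab] at ht
    have hft := hM t (Ioc_subset_Icc_self ht)
    rw [norm_div, Real.norm_of_nonneg (by linarith : 0 ≤ x - t)]
    gcongr
    linarith [norm_nonneg (f t)]
  · refine ae_of_all _ fun t ht x hx => ?_
    have hxt : x - t ≠ 0 := by linarith [gap x hx t ht]
    simpa [div_eq_inv_mul] using ((hasDerivAt_id x).sub_const t).log hxt |>.mul_const (f t)

theorem tendsto_integral_log_sub_mul_sub_log (hf : Continuous f) (hab : a ≤ b)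
    (hf₀ : ∀ l ∈ Icc a b, 0 ≤ f l) :
    Tendsto (fun y => (∫ l in a..b, log (y - l) * f l) - (∫ l in a..b, f l) * log y)
      atTop (𝓝 0) := by
  have hlim (c : ℝ) :
      Tendsto (fun y => (∫ l in a..b, f l) * (log (y - c) - log y)) atTop (𝓝 0) := by
    simpa [sub_eq_add_neg] using (tendsto_log_comp_add_sub_log (-c)).const_mul (∫ l in a..b, f l)
  have hbounds {y : ℝ} (hy : b < y) :
      (∫ l in a..b, f l) * log (y - b) ≤ ∫ l in a..b, log (y - l) * f l ∧
        ∫ l in a..b, log (y - l) * f l ≤ (∫ l in a..b, f l) * log (y - a) := by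
    have hint := (continuousOn_log_sub_mul hf hab hy).intervalIntegrable (μ := volume)
    rw [← intervalIntegral.integral_mul_const, ← intervalIntegral.integral_mul_const]
    have hfint := (hf.intervalIntegrable a b).mul_const (μ := volume)
    constructor
    · refine integral_mono_on hab (hfint _) hint fun l hl => ?_
      rw [mul_comm (f l)]
      exact mul_le_mul_of_nonneg_right (log_le_log (by linarith) (by linarith [hl.2])) (hf₀ l hl)
    · refine integral_mono_on hab hint (hfint _) fun l hl => ?_
      rw [mul_comm (f l)]
      exact mul_le_mul_of_nonneg_right (log_le_log (by linarith [hl.2]) (by linarith [hl.1]))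
        (hf₀ l hl)
  refine tendsto_of_tendsto_of_tendsto_of_le_of_le' (hlim b) (hlim a) ?_ ?_ <;>
    filter_upwards [eventually_gt_atTop b] with y hy <;> rw [mul_sub]
  · linarith [(hbounds hy).1]
  · linarith [(hbounds hy).2]

end LogPotential

noncomputable def semicircleDensity (l : ℝ) : ℝ := 1 / (2 * π) * √(4 - l ^ 2)

theorem continuous_semicircleDensity : Continuous semicircleDensity := by
  unfold semicircleDensity; fun_prop

theorem semicircleDensity_nonneg (l : ℝ) : 0 ≤ semicircleDensity l := by
  unfold semicircleDensity; positivity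

theorem semicircleDensity_neg (l : ℝ) : semicircleDensity (-l) = semicircleDensity l := by
  simp only [semicircleDensity, neg_sq]

theorem integral_semicircle (g : ℝ → ℝ) :
    ∫ l, g l ∂semicircle = ∫ l in (-2)..2, g l * semicircleDensity l := by
  have hsupp (l : ℝ) (hl : l ∉ Ioc (-2) 2) : g l * semicircleDensity l = 0 := by
    have : 4 - l ^ 2 ≤ 0 := by
      simp only [mem_Ioc, not_and_or, not_lt, not_le] at hl
      rcases hl with hl | hl <;> nlinarith
    simp [semicircleDensity, sqrt_eq_zero'.2 this]
  rw [show semicircle = volume.withDensity fun l => ENNReal.ofReal (semicircleDensity l) from rfl,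
    integral_withDensity_eq_integral_toReal_smul
    continuous_semicircleDensity.measurable.ennreal_ofReal
    (ae_of_all _ fun _ => ENNReal.ofReal_lt_top), intervalIntegral.integral_of_le (by norm_num),
    setIntegral_eq_integral_of_forall_compl_eq_zero hsupp]
  congr 1 with l
  rw [ENNReal.toReal_ofReal (semicircleDensity_nonneg l), smul_eq_mul, mul_comm]

theorem integral_sqrt_four_sub_sq : ∫ l in (-2 : ℝ)..2, √(4 - l ^ 2) = 2 * π := by
  have hscale (u : ℝ) : √(4 - (2 * u) ^ 2) = 2 * √(1 - u ^ 2) := by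
    rw [show 4 - (2 * u) ^ 2 = 2 ^ 2 * (1 - u ^ 2) by ring, sqrt_mul (by norm_num),
      sqrt_sq (by norm_num)]
  have := integral_comp_mul_left (fun l => √(4 - l ^ 2)) (two_ne_zero' ℝ) (a := -1) (b := 1)
  simp only [hscale, intervalIntegral.integral_const_mul] at this
  norm_num [integral_sqrt_one_sub_sq] at this
  linarith

theorem integral_semicircleDensity : ∫ l in (-2 : ℝ)..2, semicircleDensity l = 1 := by
  simp only [semicircleDensity, intervalIntegral.integral_const_mul, integral_sqrt_four_sub_sq]
  field_simp

section Stieltjes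

variable {x l : ℝ}

theorem hasDerivAt_sqrt_four_sub_sq (hl : l ∈ Ioo (-2 : ℝ) 2) :
    HasDerivAt (fun t => √(4 - t ^ 2)) (-l / √(4 - l ^ 2)) l := by
  have h4 : 0 < 4 - l ^ 2 := by nlinarith [hl.1, hl.2]
  convert ((hasDerivAt_pow 2 l).const_sub 4).sqrt h4.ne' using 1
  field_simp
  ring

theorem hasDerivAt_arcsin_div_two (hl : l ∈ Ioo (-2 : ℝ) 2) :
    HasDerivAt (fun t => arcsin (t / 2)) (1 / √(4 - l ^ 2)) l := by
  refine ((hasDerivAt_arcsin (x := l / 2) (by linarith [hl.1]) (by linarith [hl.2])).comp l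
    ((hasDerivAt_id l).div_const 2)).congr_deriv ?_
  rw [show 1 - (l / 2) ^ 2 = (4 - l ^ 2) / 2 ^ 2 by ring, sqrt_div' _ (by norm_num),
    sqrt_sq zero_le_two]
  field_simp

theorem hasDerivAt_arcsin_four_sub_mul_div (hx : 2 < x) (hl : l ∈ Ioo (-2 : ℝ) 2) :
    HasDerivAt (fun t => arcsin ((4 - x * t) / (2 * (x - t))))
      (-√(x ^ 2 - 4) / ((x - l) * √(4 - l ^ 2))) l := by
  have hq2 : √(4 - l ^ 2) ^ 2 = 4 - l ^ 2 := sq_sqrt (by nlinarith [hl.1, hl.2])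
  have hs2 : √(x ^ 2 - 4) ^ 2 = x ^ 2 - 4 := sq_sqrt (by nlinarith)
  have hq : 0 < √(4 - l ^ 2) := sqrt_pos.2 (by nlinarith [hl.1, hl.2])
  have hs : 0 < √(x ^ 2 - 4) := sqrt_pos.2 (by nlinarith)
  have hxl : 0 < x - l := by linarith [hl.2]
  have hu : HasDerivAt (fun t => (4 - x * t) / (2 * (x - t)))
      (-(x ^ 2 - 4) / (2 * (x - l) ^ 2)) l := by
    refine ((((hasDerivAt_id l).const_mul x).const_sub 4).div
      (((hasDerivAt_id l).const_sub x).const_mul 2) (by simp; positivity)).congr_deriv ?_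
    simp only [id]
    field_simp
    ring
  have hcos : 1 - ((4 - x * l) / (2 * (x - l))) ^ 2
      = (√(4 - l ^ 2) * √(x ^ 2 - 4) / (2 * (x - l))) ^ 2 := by
    rw [div_pow (√(4 - l ^ 2) * _), mul_pow, hq2, hs2]
    field_simp
    ring
  have hne : ((4 - x * l) / (2 * (x - l))) ^ 2 ≠ 1 := by
    intro h
    rw [h, sub_self] at hcos
    exact (pow_pos (by positivity) 2).ne hcos
  refine ((hasDerivAt_arcsin (fun h => hne (by rw [h]; norm_num))
    (fun h => hne (by rw [h]; norm_num))).comp l hu).congr_deriv ?_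
  rw [hcos, sqrt_sq (by positivity)]
  field_simp
  rw [hs2]

end Stieltjes

theorem integral_sqrt_four_sub_sq_div_sub {x : ℝ} (hx : 2 < x) :
    ∫ l in (-2 : ℝ)..2, √(4 - l ^ 2) / (x - l) = π * (x - √(x ^ 2 - 4)) := by
  have hxl (l : ℝ) (hl : l ∈ Icc (-2 : ℝ) 2) : x - l ≠ 0 := by linarith [hl.2]
  have hG (l : ℝ) (hl : l ∈ Ioo (-2 : ℝ) 2) :
      HasDerivAt (fun t => √(x ^ 2 - 4) * arcsin ((4 - x * t) / (2 * (x - t)))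
        + x * arcsin (t / 2) - √(4 - t ^ 2)) (√(4 - l ^ 2) / (x - l)) l := by
    refine ((((hasDerivAt_arcsin_four_sub_mul_div hx hl).const_mul _).add
      ((hasDerivAt_arcsin_div_two hl).const_mul x)).sub
      (hasDerivAt_sqrt_four_sub_sq hl)).congr_deriv ?_
    have hq2 : √(4 - l ^ 2) ^ 2 = 4 - l ^ 2 := sq_sqrt (by nlinarith [hl.1, hl.2])
    have hs2 : √(x ^ 2 - 4) ^ 2 = x ^ 2 - 4 := sq_sqrt (by nlinarith)
    have hq : 0 < √(4 - l ^ 2) := sqrt_pos.2 (by nlinarith [hl.1, hl.2])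
    have := hxl l (Ioo_subset_Icc_self hl)
    field_simp
    linear_combination -hs2 - hq2
  rw [integral_eq_sub_of_hasDerivAt_of_le (by norm_num) ?cont hG
    ((continuousOn_of_forall_continuousAt fun l hl => ?_).intervalIntegrable)]
  case cont =>
    refine ContinuousOn.sub (ContinuousOn.add ?_ (by fun_prop)) (by fun_prop)
    exact continuousOn_const.mul (continuous_arcsin.comp_continuousOn
      (ContinuousOn.div (by fun_prop) (by fun_prop) fun l hl => by simpa using hxl l hl))
  · have hm : (4 - x * 2) / (2 * (x - 2)) = -1 := by
      rw [div_eq_iff (by linarith)]; ring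
    have hp : (4 - x * -2) / (2 * (x - -2)) = 1 := by
      rw [div_eq_iff (by linarith)]; ring
    rw [hm, hp]
    norm_num [arcsin_neg]
    ring
  · rw [uIcc_of_le (by norm_num)] at hl
    exact (ContinuousAt.div (by fun_prop) (by fun_prop) (hxl l hl))

theorem integral_semicircleDensity_div_sub {x : ℝ} (hx : 2 < x) :
    ∫ l in (-2 : ℝ)..2, semicircleDensity l / (x - l) = (x - √(x ^ 2 - 4)) / 2 := by
  simp only [semicircleDensity, mul_div_assoc, intervalIntegral.integral_const_mul,
    integral_sqrt_four_sub_sq_div_sub hx]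
  field_simp

theorem integral_log_abs_sub_neg_mul_semicircleDensity (x : ℝ) :
    ∫ l in (-2 : ℝ)..2, log |l - -x| * semicircleDensity l
      = ∫ l in (-2 : ℝ)..2, log |l - x| * semicircleDensity l := by
  have := integral_comp_neg (a := -2) (b := 2) fun l => log |l - x| * semicircleDensity l
  rw [neg_neg] at this
  rw [← this]
  refine integral_congr fun l _ => ?_
  rw [semicircleDensity_neg, ← abs_neg (-l - x)]
  ring_nf

noncomputable def semicircleLogPotentialOutside (x : ℝ) : ℝ :=
  x ^ 2 / 4 - 1 / 2 - x / 4 * √(x ^ 2 - 4) + log ((x + √(x ^ 2 - 4)) / 2)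

section Outside

variable {x : ℝ}

theorem hasDerivAt_semicircleLogPotentialOutside (hx : 2 < x) :
    HasDerivAt semicircleLogPotentialOutside ((x - √(x ^ 2 - 4)) / 2) x := by
  have hs2 : √(x ^ 2 - 4) ^ 2 = x ^ 2 - 4 := sq_sqrt (by nlinarith)
  have hs : 0 < √(x ^ 2 - 4) := sqrt_pos.2 (by nlinarith)
  have hsqrt : HasDerivAt (fun y => √(y ^ 2 - 4)) (2 * x ^ 1 / (2 * √(x ^ 2 - 4))) x := by
    simpa using ((hasDerivAt_pow 2 x).sub_const 4).sqrt (by nlinarith : x ^ 2 - 4 ≠ 0)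
  have hw : (x + √(x ^ 2 - 4)) / 2 ≠ 0 := by positivity
  refine (((((hasDerivAt_pow 2 x).div_const 4).sub_const (1 / 2)).sub
    (((hasDerivAt_id' x).div_const 4).mul hsqrt)).add
    ((((hasDerivAt_id' x).add hsqrt).div_const 2).log hw)).congr_deriv ?_
  simp only [Pi.add_apply]
  field_simp
  linear_combination 2 * (x + √(x ^ 2 - 4)) * hs2

-- With `x = w + 1/w`, `w > 1`, this is `1 / (2 w²) + log w`.
theorem semicircleLogPotentialOutside_eq (hx : 2 < x) :
    semicircleLogPotentialOutside x
      = 2 / (x + √(x ^ 2 - 4)) ^ 2 + log ((x + √(x ^ 2 - 4)) / 2) := by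
  have hs2 : √(x ^ 2 - 4) ^ 2 = x ^ 2 - 4 := sq_sqrt (by nlinarith)
  have hw : x + √(x ^ 2 - 4) ≠ 0 := by positivity
  rw [semicircleLogPotentialOutside, add_left_inj, eq_div_iff (pow_ne_zero 2 hw)]
  linear_combination (-x ^ 2 - 2 - x * √(x ^ 2 - 4)) / 4 * hs2

end Outside

theorem tendsto_semicircleLogPotentialOutside_sub_log :
    Tendsto (fun y => semicircleLogPotentialOutside y - log y) atTop (𝓝 0) := by
  have hw : Tendsto (fun y => y + √(y ^ 2 - 4)) atTop atTop :=
    tendsto_atTop_mono (fun _ => le_add_of_nonneg_right (sqrt_nonneg _)) tendsto_id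
  have h₁ : Tendsto (fun y => 2 / (y + √(y ^ 2 - 4)) ^ 2) atTop (𝓝 0) :=
    tendsto_const_nhds.div_atTop ((tendsto_pow_atTop two_ne_zero).comp hw)
  have h₂ : Tendsto (fun y => log ((y + √(y ^ 2 - 4)) / 2) - log y) atTop (𝓝 0) := by
    refine tendsto_of_tendsto_of_tendsto_of_le_of_le' (tendsto_log_comp_add_sub_log (-1))
      tendsto_const_nhds ?_ ?_
    all_goals filter_upwards [eventually_gt_atTop 2] with y hy
    all_goals have hs2 : √(y ^ 2 - 4) ^ 2 = y ^ 2 - 4 := sq_sqrt (by nlinarith)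
    all_goals have hs := sqrt_nonneg (y ^ 2 - 4)
    · exact sub_le_sub_right (log_le_log (by linarith) (by nlinarith)) _
    · exact sub_nonpos.2 (log_le_log (by positivity) (by nlinarith))
  have := h₁.add h₂
  rw [zero_add] at this
  refine this.congr' ?_
  filter_upwards [eventually_gt_atTop 2] with y hy
  rw [semicircleLogPotentialOutside_eq hy]
  ring

theorem integral_log_sub_mul_semicircleDensity {x : ℝ} (hx : 2 < x) :
    ∫ l in (-2 : ℝ)..2, log (x - l) * semicircleDensity l
      = semicircleLogPotentialOutside x := by
  have h22 : (-2 : ℝ) ≤ 2 := by norm_num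
  set Φ := fun y => ∫ l in (-2 : ℝ)..2, log (y - l) * semicircleDensity l
  have hΦ (y : ℝ) (hy : y ∈ Ioi 2) : HasDerivAt Φ ((y - √(y ^ 2 - 4)) / 2) y := by
    simpa only [integral_semicircleDensity_div_sub hy] using
      hasDerivAt_integral_log_sub_mul continuous_semicircleDensity h22 hy
  have hR (y : ℝ) (hy : y ∈ Ioi 2) := hasDerivAt_semicircleLogPotentialOutside hy
  obtain ⟨c, hc⟩ := isOpen_Ioi.exists_eq_add_of_deriv_eq isPreconnected_Ioi
    (fun y hy => (hΦ y hy).differentiableAt.differentiableWithinAt)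
    (fun y hy => (hR y hy).differentiableAt.differentiableWithinAt)
    (fun y hy => (hΦ y hy).deriv.trans (hR y hy).deriv.symm)
  have hlim : Tendsto (fun y => (Φ y - log y) - (semicircleLogPotentialOutside y - log y))
      atTop (𝓝 0) := by
    simpa [integral_semicircleDensity] using
      (tendsto_integral_log_sub_mul_sub_log continuous_semicircleDensity h22
        fun l _ => semicircleDensity_nonneg l).sub tendsto_semicircleLogPotentialOutside_sub_log
  have hc₀ : c = 0 := by
    refine tendsto_nhds_unique (tendsto_const_nhds.congr' ?_) hlim
    filter_upwards [eventually_gt_atTop 2] with y hy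
    rw [hc hy]
    ring
  simpa [hc₀] using hc hx

/-- For `|x| > 2`, the log-potential of the semicircle law equals
`x²/4 - 1/2 - (|x|/4)√(x² - 4) + log((|x| + √(x² - 4))/2)`. -/
theorem logPotential_semicircle_of_two_lt_abs (x : ℝ) (hx : 2 < |x|) :
    ∫ l, Real.log |l - x| ∂semicircle =
      x ^ 2 / 4 - 1 / 2 - (|x| / 4) * Real.sqrt (x ^ 2 - 4)
        + Real.log ((|x| + Real.sqrt (x ^ 2 - 4)) / 2) := by
  have hreflect : ∫ l in (-2 : ℝ)..2, log |l - x| * semicircleDensity l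
      = ∫ l in (-2 : ℝ)..2, log |l - (|x|)| * semicircleDensity l := by
    rcases abs_choice x with h | h <;> rw [h]
    exact (integral_log_abs_sub_neg_mul_semicircleDensity x).symm
  have hlog (l : ℝ) : log |l - (|x|)| = log (|x| - l) := by
    rw [log_abs, ← neg_sub, log_neg_eq_log]
  rw [integral_semicircle, hreflect]
  simp only [hlog]
  rw [integral_log_sub_mul_semicircleDensity hx, semicircleLogPotentialOutside, sq_abs]
end

section
/- Fix a ∈ (0,1) and b ≥ 1, and define f_{a,b}(x) = (1/2)log(1 − a) − (2b/a)x² + x² + x√(1 + x²) + arcsinh(x). Then f_{a,b} has a unique global maximum on ℝ, attained at x_{a,b} = a/(2√(b(b − a))). -/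
/-!
With `c = 2b/a - 1 > 1`, the derivative of `f_{a,b}` is `2(√(1 + x²) - c x)`, because
`x ↦ x√(1 + x²) + arsinh x` has derivative `2√(1 + x²)`. The derivative is positive for `x ≤ 0`,
and for `x > 0` its sign is that of `1 + x² - c²x²`, so it changes sign exactly once, at the
positive root `x₀` of `(c² - 1) x₀² = 1`; since `c² - 1 = 4b(b - a)/a²`, this root is `x_{a,b}`.
-/

open Real

theorem hasDerivAt_mul_sqrt_one_add_sq_add_arsinh (x : ℝ) :
    HasDerivAt (fun x => x * √(1 + x ^ 2) + arsinh x) (2 * √(1 + x ^ 2)) x := by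
  have hpos : 0 < 1 + x ^ 2 := by positivity
  have hs : √(1 + x ^ 2) ≠ 0 := (sqrt_pos.2 hpos).ne'
  have hsqrt : HasDerivAt (fun x => √(1 + x ^ 2)) (x / √(1 + x ^ 2)) x :=
    (((hasDerivAt_pow 2 x).const_add 1).sqrt hpos.ne').congr_deriv (by field_simp; ring)
  refine (((hasDerivAt_id x).mul hsqrt).add (hasDerivAt_arsinh x)).congr_deriv ?_
  field_simp
  rw [sq_sqrt hpos.le, id]
  ring

section SignOfDerivative

variable {c x₀ x : ℝ}

theorem mul_lt_sqrt_one_add_sq (hc : 0 ≤ c) (hroot : (c ^ 2 - 1) * x₀ ^ 2 = 1) (hx : x < x₀) :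
    c * x < √(1 + x ^ 2) := by
  rcases le_or_gt x 0 with hx0 | hx0
  · exact (mul_nonpos_of_nonneg_of_nonpos hc hx0).trans_lt (sqrt_pos.2 (by positivity))
  · have hsq : (c * x) ^ 2 < 1 + x ^ 2 := by nlinarith
    exact lt_sqrt_of_sq_lt hsq

theorem sqrt_one_add_sq_lt_mul (hc : 0 ≤ c) (hx₀ : 0 < x₀) (hroot : (c ^ 2 - 1) * x₀ ^ 2 = 1)
    (hx : x₀ < x) : √(1 + x ^ 2) < c * x := by
  have hsq : 1 + x ^ 2 < (c * x) ^ 2 := by nlinarith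
  exact (sqrt_lt' (by nlinarith [mul_nonneg hc (hx₀.trans hx).le])).2 hsq

end SignOfDerivative

theorem apply_lt_of_deriv_pos_left_of_deriv_neg_right {f f' : ℝ → ℝ} {x₀ : ℝ}
    (hf : ∀ x, HasDerivAt f (f' x) x) (hleft : ∀ x < x₀, 0 < f' x)
    (hright : ∀ x, x₀ < x → f' x < 0) {x : ℝ} (hx : x ≠ x₀) : f x < f x₀ := by
  have hcont : Continuous f := continuous_iff_continuousAt.2 fun x => (hf x).continuousAt
  rcases hx.lt_or_gt with hlt | hgt
  · refine strictMonoOn_of_deriv_pos (convex_Iic x₀) hcont.continuousOn (fun y hy => ?_)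
      hlt.le Set.self_mem_Iic hlt
    rw [interior_Iic] at hy
    exact (hf y).deriv ▸ hleft y hy
  · refine strictAntiOn_of_deriv_neg (convex_Ici x₀) hcont.continuousOn (fun y hy => ?_)
      Set.self_mem_Ici hgt.le hgt
    rw [interior_Ici] at hy
    exact (hf y).deriv ▸ hright y hy

/-- For `a ∈ (0,1)` and `b ≥ 1`, the function
`f(x) = (1/2)log(1-a) - (2b/a)x² + x² + x√(1+x²) + arcsinh(x)` has a unique global
maximum, attained at `x = a/(2√(b(b-a)))`. -/
theorem f_ab_unique_global_max (a b : ℝ) (ha : a ∈ Set.Ioo (0 : ℝ) 1) (hb : 1 ≤ b) :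
    let f : ℝ → ℝ := fun x =>
      (1 / 2) * Real.log (1 - a) - (2 * b / a) * x ^ 2 + x ^ 2
        + x * Real.sqrt (1 + x ^ 2) + Real.arsinh x
    let xab : ℝ := a / (2 * Real.sqrt (b * (b - a)))
    (∀ x, f x ≤ f xab) ∧ (∀ x, f x = f xab → x = xab) := by
  intro f xab
  obtain ⟨ha0, ha1⟩ := ha
  set c := 2 * b / a - 1 with hc
  have hc0 : 0 ≤ c := by rw [hc, sub_nonneg, le_div_iff₀ ha0]; linarith
  have hderiv (x : ℝ) : HasDerivAt f (2 * (√(1 + x ^ 2) - c * x)) x := by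
    have hquad : HasDerivAt (fun x : ℝ => -(2 * b / a) * x ^ 2 + x ^ 2) (-2 * c * x) x :=
      (((hasDerivAt_pow 2 x).const_mul _).add (hasDerivAt_pow 2 x)).congr_deriv (by rw [hc]; ring)
    have hf : f = fun x => (1 / 2) * log (1 - a) + (-(2 * b / a) * x ^ 2 + x ^ 2)
        + (x * √(1 + x ^ 2) + arsinh x) := by
      ext y; simp only [f]; ring
    rw [hf]
    exact ((hquad.const_add _).add (hasDerivAt_mul_sqrt_one_add_sq_add_arsinh x)).congr_deriv
      (by ring)
  have hba : 0 < b - a := by linarith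
  have hbb : 0 < b * (b - a) := by positivity
  have hxab : 0 < xab := by positivity
  have hroot : (c ^ 2 - 1) * xab ^ 2 = 1 := by
    simp only [xab, div_pow, mul_pow, sq_sqrt hbb.le, hc]
    field_simp
    ring
  have hmax (x : ℝ) (hx : x ≠ xab) : f x < f xab :=
    apply_lt_of_deriv_pos_left_of_deriv_neg_right hderiv
      (fun y hy => by linarith [mul_lt_sqrt_one_add_sq hc0 hroot hy])
      (fun y hy => by linarith [sqrt_one_add_sq_lt_mul hc0 hxab hroot hy]) hx
  refine ⟨fun x => ?_, fun x hfx => ?_⟩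
  · rcases eq_or_ne x xab with rfl | hx
    exacts [le_rfl, (hmax x hx).le]
  · by_contra hx
    exact (hmax x hx).ne hfx
end

section
/- Fix a ∈ (0,1) and b ≥ 1, define f_{a,b}(x) = (1/2)log(1 − a) − (2b/a)x² + x² + x√(1 + x²) + arcsinh(x), and let x_{a,b} = a/(2√(b(b − a))). Then f_{a,b}(x_{a,b}) = (1/2)log(b(1 − a)/(b − a)). -/
open Real

/-- For `a ∈ (0,1)`, `b ≥ 1`, the value of
`f(x) = (1/2)log(1-a) - (2b/a)x² + x² + x√(1+x²) + arcsinh(x)` at its maximizer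
`x_{a,b} = a/(2√(b(b-a)))` equals `(1/2)log(b(1-a)/(b-a))`. -/
theorem f_ab_value_at_max (a b : ℝ) (ha : a ∈ Set.Ioo (0 : ℝ) 1) (hb : 1 ≤ b) :
    let f : ℝ → ℝ := fun x =>
      (1 / 2) * Real.log (1 - a) - (2 * b / a) * x ^ 2 + x ^ 2
        + x * Real.sqrt (1 + x ^ 2) + Real.arsinh x
    let xab : ℝ := a / (2 * Real.sqrt (b * (b - a)))
    f xab = (1 / 2) * Real.log (b * (1 - a) / (b - a)) := by
  obtain ⟨ha0, ha1⟩ := ha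
  intro f xab
  have hba : (0:ℝ) < b - a := by linarith
  have hb0 : (0:ℝ) < b := by linarith
  set s := Real.sqrt (b * (b - a)) with hsdef
  have hs : 0 < s := Real.sqrt_pos.mpr (by positivity)
  have hs2 : s ^ 2 = b * (b - a) := Real.sq_sqrt (by positivity)
  have hx : xab = a / (2 * s) := rfl
  have h1x : 1 + xab ^ 2 = ((2 * b - a) / (2 * s)) ^ 2 := by
    rw [hx]; field_simp; nlinarith [hs2]
  have hsq : Real.sqrt (1 + xab ^ 2) = (2 * b - a) / (2 * s) := by
    have h2ba : (0:ℝ) < 2 * b - a := by linarith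
    rw [h1x, Real.sqrt_sq (by positivity)]
  have harc : Real.arsinh xab = Real.log (b / s) := by
    rw [Real.arsinh, hsq, hx]
    congr 1
    field_simp
    ring
  have hmid : -(2 * b / a) * xab ^ 2 + xab ^ 2 + xab * ((2 * b - a) / (2 * s)) = 0 := by
    rw [hx]
    field_simp
    nlinarith [hs2]
  have hlogs : Real.log s = (1/2) * (Real.log b + Real.log (b - a)) := by
    rw [hsdef, Real.log_sqrt (by positivity), Real.log_mul hb0.ne' hba.ne']; ring
  have hlogbs : Real.log (b / s) = (1/2) * (Real.log b - Real.log (b - a)) := by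
    rw [Real.log_div (by positivity) (by positivity), hlogs]; ring
  have h1a : (0:ℝ) < 1 - a := by linarith
  have hRHS : Real.log (b * (1 - a) / (b - a))
      = Real.log b + Real.log (1 - a) - Real.log (b - a) := by
    rw [Real.log_div (by positivity) hba.ne', Real.log_mul hb0.ne' h1a.ne']
  show (1 / 2) * Real.log (1 - a) - (2 * b / a) * xab ^ 2 + xab ^ 2
        + xab * Real.sqrt (1 + xab ^ 2) + Real.arsinh xab
      = (1 / 2) * Real.log (b * (1 - a) / (b - a))
  rw [hsq, harc, hlogbs, hRHS]
  linarith [hmid]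
end

section
/- For every a ∈ (0,1) and b ≥ 1, the function f_{a,b}(x) = (1/2)log(1 − a) − (2b/a)x² + x² + x√(1 + x²) + arcsinh(x) satisfies f_{a,b}(x) ≤ 0 for all real x, and its maximum value is 0 if and only if b = 1. -/
/-!
Put `u = x + √(1 + x²) = exp (arsinh x)`, so that `x = (u - u⁻¹)/2`, `√(1 + x²) = (u + u⁻¹)/2`
and `arsinh x = log u`, and let `t = (1 - a)u²`. Then
`f_{a,b}(x) = (log t - (t - 1))/2 - (t - 1)²/(2au²) - 2(b - 1)x²/a`,
a sum of three nonpositive terms. For `b = 1` all three vanish where `t = 1`; for `b > 1` the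
last one vanishes only at `x = 0`, where `f_{a,b}(0) = log(1 - a)/2 < 0`.
-/

open Real

noncomputable def fab (a b x : ℝ) : ℝ :=
  (1 / 2) * log (1 - a) - (2 * b / a) * x ^ 2 + x ^ 2 + x * √(1 + x ^ 2) + arsinh x

section
variable {a : ℝ}

theorem fab_eq_fab_one_sub (b : ℝ) (ha : a ≠ 0) (x : ℝ) :
    fab a b x = fab a 1 x - 2 * (b - 1) / a * x ^ 2 := by
  unfold fab
  field_simp
  ring

theorem fab_zero (b : ℝ) : fab a b 0 = (1 / 2) * log (1 - a) := by
  simp [fab]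

theorem fab_one_eq_of_exp_arsinh (ha0 : a ≠ 0) (ha1 : a < 1) {x u : ℝ}
    (hu : exp (arsinh x) = u) :
    fab a 1 x = (log ((1 - a) * u ^ 2) - ((1 - a) * u ^ 2 - 1)) / 2
      - ((1 - a) * u ^ 2 - 1) ^ 2 / (2 * a * u ^ 2) := by
  obtain ⟨y, rfl⟩ : ∃ y, x = sinh y := ⟨arsinh x, (sinh_arsinh x).symm⟩
  rw [arsinh_sinh] at hu
  subst hu
  have hlog : log ((1 - a) * exp y ^ 2) = log (1 - a) + 2 * y := by
    rw [log_mul (by linarith) (by positivity), log_pow, log_exp]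
    push_cast
    ring
  have hcosh : √(1 + sinh y ^ 2) = cosh y := by rw [← cosh_sq', sqrt_sq (cosh_pos y).le]
  rw [fab, hlog, hcosh, arsinh_sinh, sinh_eq, cosh_eq, exp_neg]
  field_simp
  ring

theorem fab_one_nonpos (ha0 : 0 < a) (ha1 : a < 1) (x : ℝ) : fab a 1 x ≤ 0 := by
  rw [fab_one_eq_of_exp_arsinh ha0.ne' ha1 rfl]
  have hlog := log_le_sub_one_of_pos (x := (1 - a) * exp (arsinh x) ^ 2)
    (mul_pos (by linarith) (by positivity))
  have hquot : 0 ≤ ((1 - a) * exp (arsinh x) ^ 2 - 1) ^ 2 / (2 * a * exp (arsinh x) ^ 2) := by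
    positivity
  linarith

theorem fab_one_sinh_eq_zero (ha0 : 0 < a) (ha1 : a < 1) :
    fab a 1 (sinh (-log (1 - a) / 2)) = 0 := by
  have ht : (1 - a) * exp (-log (1 - a) / 2) ^ 2 = 1 := by
    have h1a : 0 < 1 - a := by linarith
    rw [← exp_nat_mul, show ((2 : ℕ) : ℝ) * (-log (1 - a) / 2) = -log (1 - a) by push_cast; ring,
      exp_neg, exp_log h1a]
    field_simp
  rw [fab_one_eq_of_exp_arsinh ha0.ne' ha1 (by rw [arsinh_sinh]), ht]
  simp

theorem fab_nonpos {b : ℝ} (ha0 : 0 < a) (ha1 : a < 1) (hb : 1 ≤ b) (x : ℝ) :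
    fab a b x ≤ 0 := by
  have hquad : 0 ≤ 2 * (b - 1) / a * x ^ 2 := by
    have : 0 ≤ b - 1 := by linarith
    positivity
  linarith [fab_eq_fab_one_sub b ha0.ne' x, fab_one_nonpos ha0 ha1 x]

theorem fab_lt_zero {b : ℝ} (ha0 : 0 < a) (ha1 : a < 1) (hb : 1 < b) (x : ℝ) :
    fab a b x < 0 := by
  rcases eq_or_ne x 0 with rfl | hx
  · rw [fab_zero]
    linarith [log_neg (by linarith : 0 < 1 - a) (by linarith)]
  · have hquad : 0 < 2 * (b - 1) / a * x ^ 2 := by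
      have : 0 < b - 1 := by linarith
      positivity
    linarith [fab_eq_fab_one_sub b ha0.ne' x, fab_one_nonpos ha0 ha1 x]

end

/-- For `a ∈ (0,1)` and `b ≥ 1`, the function
`f(x) = (1/2)log(1-a) - (2b/a)x² + x² + x√(1+x²) + arcsinh(x)` is nonpositive on `ℝ`,
and its maximum value is `0` (i.e. the value `0` is attained) if and only if `b = 1`. -/
theorem f_ab_nonpos_and_zero_iff (a b : ℝ) (ha : a ∈ Set.Ioo (0 : ℝ) 1) (hb : 1 ≤ b) :
    let f : ℝ → ℝ := fun x =>
      (1 / 2) * Real.log (1 - a) - (2 * b / a) * x ^ 2 + x ^ 2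
        + x * Real.sqrt (1 + x ^ 2) + Real.arsinh x
    (∀ x, f x ≤ 0) ∧ ((∃ x, f x = 0) ↔ b = 1) := by
  obtain ⟨ha0, ha1⟩ := ha
  show (∀ x, fab a b x ≤ 0) ∧ ((∃ x, fab a b x = 0) ↔ b = 1)
  refine ⟨fab_nonpos ha0 ha1 hb, fun ⟨x, hx⟩ => ?_, ?_⟩
  · by_contra hb1
    exact (fab_lt_zero ha0 ha1 (lt_of_le_of_ne hb (Ne.symm hb1)) x).ne hx
  · rintro rfl
    exact ⟨_, fab_one_sinh_eq_zero ha0 ha1⟩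
end

section
/- Fix p ≥ 3, let a = (p − 2)/(2p), and suppose b ≥ 4a. Define g(u) = a u² − b u + 1_{|u| ≥ 2}∫₂^{|u|}√(t² − 4) dt. Then the unique minimizer of g is u_min = (2ab − √(b² + 4 − 16a²)) / (4a² − 1), and −(1/2)min_u g(u) = (1/4) b·u_min + log(((1/2) − a)u_min + (1/2)b). -/
open Real intervalIntegral Set MeasureTheory

/-!
Write `g u = a u² - b u + T u`, where `T u = ∫₂^{|u|} √(t² - 4) dt` for `|u| ≥ 2` and `T u = 0`
otherwise. Since `√(t² - 4)` is nondecreasing on `[2, ∞)` and `T ≥ 0`, for every `u ≥ 2` the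
number `√(u² - 4)` is a subgradient of `T` at `u`. Squaring the critical point equation
`2 a u - b + √(u² - 4) = 0` gives a quadratic whose larger root is `u_min ≥ 2`, and `b ≥ 4a`
makes `b - 2 a u_min ≥ 0`, so `u_min` solves the unsquared equation. Hence
`g v ≥ g u_min + a (v - u_min)²` for all `v`, which gives minimality and uniqueness. The value
follows from the primitive `t √(t² - 4) / 2 - 2 log ((t + √(t² - 4)) / 2)` of `√(t² - 4)`.
-/

lemma mul_sub_le_integral_of_monotoneOn {f : ℝ → ℝ} {u x : ℝ} (hf : MonotoneOn f (uIcc u x))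
    (hfi : IntervalIntegrable f volume u x) : f u * (x - u) ≤ ∫ t in u..x, f t := by
  rcases le_total u x with hux | hxu
  · have := integral_mono_on hux intervalIntegrable_const hfi
      fun t ht => hf left_mem_uIcc (Icc_subset_uIcc ht) ht.1
    simpa [mul_comm] using this
  · have := integral_mono_on hxu hfi.symm intervalIntegrable_const
      fun t ht => hf (Icc_subset_uIcc' ht) left_mem_uIcc ht.2
    rw [intervalIntegral.integral_const, smul_eq_mul] at this
    rw [integral_symm]
    nlinarith

lemma continuous_sqrt_sq_sub_four : Continuous fun t : ℝ => √(t ^ 2 - 4) := by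
  fun_prop

lemma monotoneOn_sqrt_sq_sub_four : MonotoneOn (fun t : ℝ => √(t ^ 2 - 4)) (Ici 0) :=
  fun _ hs _ _ hst => sqrt_le_sqrt (by nlinarith [mem_Ici.mp hs])

lemma hasDerivAt_sqrt_sq_sub_four {t : ℝ} (ht : 2 < t) :
    HasDerivAt (fun t : ℝ => √(t ^ 2 - 4)) (t / √(t ^ 2 - 4)) t := by
  have h := ((hasDerivAt_pow 2 t).sub_const 4).sqrt (by nlinarith)
  convert h using 1
  ring

lemma integral_sqrt_sq_sub_four {x : ℝ} (hx : 2 ≤ x) :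
    ∫ t in (2 : ℝ)..x, √(t ^ 2 - 4) =
      x * √(x ^ 2 - 4) / 2 - 2 * log ((x + √(x ^ 2 - 4)) / 2) := by
  set F : ℝ → ℝ := fun t => t * √(t ^ 2 - 4) / 2 - 2 * log ((t + √(t ^ 2 - 4)) / 2)
  have hF : ContinuousOn F (Icc 2 x) := by
    refine ContinuousOn.sub (by fun_prop) (continuousOn_const.mul (ContinuousOn.log
      (by fun_prop) fun t ht => ?_))
    have := sqrt_nonneg (t ^ 2 - 4)
    linarith [ht.1]
  have hF' : ∀ t ∈ Ioo 2 x, HasDerivAt F (√(t ^ 2 - 4)) t := by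
    intro t ht
    have hpos : 0 < t ^ 2 - 4 := by nlinarith [ht.1]
    have ht0 : 0 < t := by linarith [ht.1]
    have hs : 0 < √(t ^ 2 - 4) := sqrt_pos.mpr hpos
    have hD := hasDerivAt_sqrt_sq_sub_four ht.1
    have hprod := ((hasDerivAt_id' t).fun_mul hD).div_const 2
    have hlog := (((hasDerivAt_id' t).fun_add hD).div_const 2).log (by positivity)
    refine (hprod.sub (hlog.const_mul 2)).congr_deriv ?_
    have : t + √(t ^ 2 - 4) ≠ 0 := by positivity
    field_simp
    linear_combination -(t + √(t ^ 2 - 4)) * sq_sqrt hpos.le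
  rw [integral_eq_sub_of_hasDerivAt_of_le hx hF hF'
    (continuous_sqrt_sq_sub_four.intervalIntegrable 2 x)]
  norm_num [F]

noncomputable def tailIntegral (u : ℝ) : ℝ :=
  if 2 ≤ |u| then ∫ t in (2 : ℝ)..|u|, √(t ^ 2 - 4) else 0

lemma tailIntegral_nonneg (u : ℝ) : 0 ≤ tailIntegral u := by
  unfold tailIntegral
  split_ifs with hu
  · exact integral_nonneg hu fun t _ => sqrt_nonneg _
  · rfl

lemma tailIntegral_of_two_le {u : ℝ} (hu : 2 ≤ u) :
    tailIntegral u = ∫ t in (2 : ℝ)..u, √(t ^ 2 - 4) := by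
  rw [tailIntegral, abs_of_nonneg (by linarith), if_pos hu]

lemma sqrt_mul_sub_le_tailIntegral_sub {u : ℝ} (hu : 2 ≤ u) (v : ℝ) :
    √(u ^ 2 - 4) * (v - u) ≤ tailIntegral v - tailIntegral u := by
  have key : ∀ x, 2 ≤ x → √(u ^ 2 - 4) * (x - u) ≤ tailIntegral x - tailIntegral u := by
    intro x hx
    rw [tailIntegral_of_two_le hx, tailIntegral_of_two_le hu,
      integral_interval_sub_left (continuous_sqrt_sq_sub_four.intervalIntegrable _ _)
        (continuous_sqrt_sq_sub_four.intervalIntegrable _ _)]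
    refine mul_sub_le_integral_of_monotoneOn (monotoneOn_sqrt_sq_sub_four.mono ?_)
      (continuous_sqrt_sq_sub_four.intervalIntegrable _ _)
    exact fun t ht => mem_Ici.mpr (by linarith [le_min hu hx, ht.1])
  rcases le_total 2 v with hv | hv
  · exact key v hv
  · -- compare with the endpoint `2`, where `tailIntegral` vanishes
    have h2 := key 2 le_rfl
    have : tailIntegral 2 = 0 := by simp [tailIntegral_of_two_le]
    nlinarith [tailIntegral_nonneg v, sqrt_nonneg (u ^ 2 - 4)]

section CriticalPoint

variable {a b u : ℝ}

lemma two_le_of_eq_div (ha : 4 * a ^ 2 < 1)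
    (hu : u = (2 * a * b - √(b ^ 2 + 4 - 16 * a ^ 2)) / (4 * a ^ 2 - 1)) : 2 ≤ u := by
  -- `b² + 4 - 16a² - (2ab + 2 - 8a²)² = (1 - 4a²)(b - 4a)²`
  have hsq : (2 * a * b + 2 - 8 * a ^ 2) ^ 2 ≤ b ^ 2 + 4 - 16 * a ^ 2 := by
    nlinarith [mul_nonneg (by linarith : 0 ≤ 1 - 4 * a ^ 2) (sq_nonneg (b - 4 * a))]
  have := le_sqrt_of_sq_le hsq
  rw [hu, le_div_iff_of_neg (by linarith)]
  linarith

lemma sqrt_sq_sub_four_eq_of_eq_div (ha0 : 0 ≤ a) (ha : 4 * a ^ 2 < 1) (hb : 4 * a ≤ b)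
    (hu : u = (2 * a * b - √(b ^ 2 + 4 - 16 * a ^ 2)) / (4 * a ^ 2 - 1)) :
    √(u ^ 2 - 4) = b - 2 * a * u := by
  set D := b ^ 2 + 4 - 16 * a ^ 2 with hD
  have hsD : √D ^ 2 = D := sq_sqrt (by nlinarith)
  have hsqrtD : √D = 2 * a * b - u * (4 * a ^ 2 - 1) := by
    rw [hu, div_mul_cancel₀ _ (by linarith)]
    ring
  have hnonneg : 0 ≤ b - 2 * a * u := by
    -- `b² - 4a²D = (1 - 4a²)(b² - 16a²)`
    have h4aD : (2 * a * √D) ^ 2 ≤ b ^ 2 := by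
      rw [mul_pow, hsD]
      nlinarith [mul_nonneg (by linarith : 0 ≤ 1 - 4 * a ^ 2)
        (by nlinarith : 0 ≤ b ^ 2 - 16 * a ^ 2)]
    have := (pow_le_pow_iff_left₀ (by positivity) (by linarith) two_ne_zero).mp h4aD
    nlinarith
  have hroot : u ^ 2 - 4 = (b - 2 * a * u) ^ 2 := by
    refine mul_left_cancel₀ (by linarith : 4 * a ^ 2 - 1 ≠ 0) ?_
    rw [hsqrtD] at hsD
    linear_combination hD - hsD
  rw [hroot, sqrt_sq hnonneg]

end CriticalPoint

lemma add_mul_sq_le_of_subgradient {h : ℝ → ℝ} {a b u : ℝ}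
    (hsub : ∀ v, (b - 2 * a * u) * (v - u) ≤ h v - h u) (v : ℝ) :
    a * u ^ 2 - b * u + h u + a * (v - u) ^ 2 ≤ a * v ^ 2 - b * v + h v := by
  linear_combination hsub v

lemma eq_of_isMin_of_add_mul_sq_le {f : ℝ → ℝ} {a u w : ℝ} (ha : 0 < a)
    (hf : ∀ v, f u + a * (v - u) ^ 2 ≤ f v) (hw : ∀ v, f w ≤ f v) : w = u := by
  have : a * (w - u) ^ 2 ≤ 0 := by linarith [hf w, hw u]
  have : (w - u) ^ 2 = 0 := le_antisymm (nonpos_of_mul_nonpos_right this ha) (sq_nonneg _)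
  linarith [pow_eq_zero_iff two_ne_zero |>.mp this]

/-- For `p ≥ 3`, `a = (p-2)/(2p)` and `b ≥ 4a`, the unique minimizer of
`g(u) = a u² - b u + 1_{|u| ≥ 2} ∫₂^{|u|} √(t² - 4) dt` is
`u_min = (2ab - √(b² + 4 - 16a²))/(4a² - 1)`, and
`-(1/2) min g = (1/4) b u_min + log((1/2 - a)u_min + (1/2)b)`. -/
theorem g_min_large_b (p b : ℝ) (hp : 3 ≤ p) (hb : 4 * ((p - 2) / (2 * p)) ≤ b) :
    let a : ℝ := (p - 2) / (2 * p)
    let g : ℝ → ℝ := fun u =>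
      a * u ^ 2 - b * u + (if 2 ≤ |u| then ∫ t in (2 : ℝ)..|u|, Real.sqrt (t ^ 2 - 4) else 0)
    let umin : ℝ := (2 * a * b - Real.sqrt (b ^ 2 + 4 - 16 * a ^ 2)) / (4 * a ^ 2 - 1)
    (∀ v, g umin ≤ g v) ∧ (∀ u, (∀ v, g u ≤ g v) → u = umin) ∧
      -(1 / 2) * g umin = (1 / 4) * b * umin + Real.log ((1 / 2 - a) * umin + (1 / 2) * b) := by
  intro a g umin
  have ha0 : 0 < a := div_pos (by linarith) (by linarith)
  have ha : 4 * a ^ 2 < 1 := by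
    have : a < 1 / 2 := by rw [div_lt_iff₀ (by linarith)]; linarith
    nlinarith
  have hu2 : 2 ≤ umin := two_le_of_eq_div ha rfl
  have hs : √(umin ^ 2 - 4) = b - 2 * a * umin :=
    sqrt_sq_sub_four_eq_of_eq_div ha0.le ha hb rfl
  have hgrowth : ∀ v, g umin + a * (v - umin) ^ 2 ≤ g v :=
    add_mul_sq_le_of_subgradient fun v => hs ▸ sqrt_mul_sub_le_tailIntegral_sub hu2 v
  refine ⟨fun v => ?_, fun w hw => eq_of_isMin_of_add_mul_sq_le ha0 hgrowth hw, ?_⟩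
  · linarith [hgrowth v, mul_nonneg ha0.le (sq_nonneg (v - umin))]
  · show -(1 / 2) * (a * umin ^ 2 - b * umin + tailIntegral umin) = _
    rw [tailIntegral_of_two_le hu2, integral_sqrt_sq_sub_four hu2, hs]
    ring_nf
end

section
/- For γ ≥ 1, define I_γ: [2, ∞) → ℝ by I_γ(x) = (1/4)∫_{γ + 1/γ}^{x} √(y² − 4) dy − (γ/2)(x − (γ + 1/γ)) + (1/8)(x² − (γ + 1/γ)²). Then I_γ is convex on [2, ∞), I_γ(x) ≥ 0 for all x ∈ [2, ∞), and I_γ(x) = 0 if and only if x = γ + 1/γ. -/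
open Real intervalIntegral Set

/-! The derivative of `I_γ = rateFunction γ`, namely `I_γ'(x) = (√(x² - 4) + x)/4 - γ/2`, is
strictly increasing on `[0, ∞)`, so `I_γ` is strictly convex there. For `γ ≥ 1` we have
`√((γ + 1/γ)² - 4) = γ - 1/γ`, so the derivative vanishes at `γ + 1/γ`, where `I_γ` also vanishes;
a strictly convex function lies strictly above its value at a critical point. -/

lemma StrictConvexOn.lt_of_hasDerivAt_eq_zero {S : Set ℝ} {f : ℝ → ℝ} {c x : ℝ}
    (hf : StrictConvexOn ℝ S f) (hc : c ∈ S) (hx : x ∈ S) (hxc : x ≠ c)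
    (hf' : HasDerivAt f 0 c) : f c < f x := by
  rcases hxc.lt_or_gt with hlt | hgt
  · have hslope := hf.slope_lt_of_hasDerivAt hx hc hlt hf'
    rw [slope_def_field, div_neg_iff] at hslope
    rcases hslope with ⟨-, hneg⟩ | ⟨hpos, -⟩ <;> linarith
  · have hslope := hf.lt_slope_of_hasDerivAt hc hx hgt hf'
    rw [slope_def_field, div_pos_iff] at hslope
    rcases hslope with ⟨hpos, -⟩ | ⟨-, hneg⟩ <;> linarith

lemma strictMonoOn_sqrt_sq_sub_four_add : StrictMonoOn (fun x : ℝ => √(x ^ 2 - 4) + x) (Ici 0) :=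
  fun a ha b hb hab => by
    have hsqrt : √(a ^ 2 - 4) ≤ √(b ^ 2 - 4) :=
      Real.sqrt_le_sqrt (by nlinarith [mem_Ici.1 ha, mem_Ici.1 hb])
    dsimp only
    linarith

lemma sqrt_sq_add_one_div_sub_four {γ : ℝ} (hγ : 1 ≤ γ) :
    √((γ + 1 / γ) ^ 2 - 4) = γ - 1 / γ := by
  have hγ0 : 0 < γ := one_pos.trans_le hγ
  have hsq : (γ + 1 / γ) ^ 2 - 4 = (γ - 1 / γ) ^ 2 := by field_simp; ring
  have hnonneg : 0 ≤ γ - 1 / γ := by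
    rw [sub_nonneg, div_le_iff₀ hγ0]
    nlinarith
  rw [hsq, Real.sqrt_sq hnonneg]

noncomputable def rateFunction (γ x : ℝ) : ℝ :=
  (1 / 4) * (∫ y in (γ + 1 / γ)..x, √(y ^ 2 - 4))
    - (γ / 2) * (x - (γ + 1 / γ)) + (1 / 8) * (x ^ 2 - (γ + 1 / γ) ^ 2)

namespace rateFunction

variable (γ : ℝ)

lemma hasDerivAt (x : ℝ) :
    HasDerivAt (rateFunction γ) ((√(x ^ 2 - 4) + x) / 4 - γ / 2) x := by
  have hcont : Continuous fun y : ℝ => √(y ^ 2 - 4) := by fun_prop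
  have hint : HasDerivAt (fun x => ∫ y in (γ + 1 / γ)..x, √(y ^ 2 - 4)) (√(x ^ 2 - 4)) x :=
    integral_hasDerivAt_right (hcont.intervalIntegrable _ _)
      hcont.aestronglyMeasurable.stronglyMeasurableAtFilter hcont.continuousAt
  have hlin := ((hasDerivAt_id x).sub_const (γ + 1 / γ)).const_mul (γ / 2)
  have hquad := ((hasDerivAt_pow 2 x).sub_const ((γ + 1 / γ) ^ 2)).const_mul (1 / 8 : ℝ)
  exact (((hint.const_mul (1 / 4 : ℝ)).sub hlin).add hquad).congr_deriv (by push_cast; ring)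

lemma deriv_eq : deriv (rateFunction γ) = fun x => (√(x ^ 2 - 4) + x) / 4 - γ / 2 :=
  funext fun x => (hasDerivAt γ x).deriv

lemma strictConvexOn : StrictConvexOn ℝ (Ici 0) (rateFunction γ) := by
  refine StrictMonoOn.strictConvexOn_of_deriv (convex_Ici 0)
    (continuous_iff_continuousAt.2 fun x => (hasDerivAt γ x).continuousAt).continuousOn ?_
  rw [deriv_eq, interior_Ici]
  intro a ha b hb hab
  have := strictMonoOn_sqrt_sq_sub_four_add (Ioi_subset_Ici_self ha) (Ioi_subset_Ici_self hb) hab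
  dsimp only at this ⊢
  linarith

lemma apply_center : rateFunction γ (γ + 1 / γ) = 0 := by
  simp [rateFunction]

variable {γ}

lemma hasDerivAt_center (hγ : 1 ≤ γ) : HasDerivAt (rateFunction γ) 0 (γ + 1 / γ) := by
  convert hasDerivAt γ (γ + 1 / γ) using 1
  rw [sqrt_sq_add_one_div_sub_four hγ]
  ring

lemma pos (hγ : 1 ≤ γ) {x : ℝ} (hx : 0 ≤ x) (hxc : x ≠ γ + 1 / γ) : 0 < rateFunction γ x := by
  have hc : γ + 1 / γ ∈ Ici (0 : ℝ) := by
    have hγ0 : 0 < γ := one_pos.trans_le hγ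
    exact mem_Ici.2 (by positivity)
  have := (strictConvexOn γ).lt_of_hasDerivAt_eq_zero hc hx hxc (hasDerivAt_center hγ)
  rwa [apply_center] at this

end rateFunction

/-- For `γ ≥ 1`, the rate function
`I_γ(x) = (1/4)∫_{γ+1/γ}^x √(y² - 4) dy - (γ/2)(x - (γ+1/γ)) + (1/8)(x² - (γ+1/γ)²)`
is convex on `[2, ∞)`, nonnegative on `[2, ∞)`, and vanishes exactly at `x = γ + 1/γ`. -/
theorem I_gamma_convex_nonneg (γ : ℝ) (hγ : 1 ≤ γ) :
    let I : ℝ → ℝ := fun x =>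
      (1 / 4) * (∫ y in (γ + 1 / γ)..x, Real.sqrt (y ^ 2 - 4))
        - (γ / 2) * (x - (γ + 1 / γ)) + (1 / 8) * (x ^ 2 - (γ + 1 / γ) ^ 2)
    ConvexOn ℝ (Set.Ici (2 : ℝ)) I ∧ (∀ x ∈ Set.Ici (2 : ℝ), 0 ≤ I x) ∧
      (∀ x ∈ Set.Ici (2 : ℝ), I x = 0 ↔ x = γ + 1 / γ) := by
  show ConvexOn ℝ (Ici 2) (rateFunction γ) ∧ (∀ x ∈ Ici (2 : ℝ), 0 ≤ rateFunction γ x) ∧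
    (∀ x ∈ Ici (2 : ℝ), rateFunction γ x = 0 ↔ x = γ + 1 / γ)
  have hx0 {x : ℝ} (hx : x ∈ Ici (2 : ℝ)) : 0 ≤ x := zero_le_two.trans hx
  refine ⟨((rateFunction.strictConvexOn γ).subset (Ici_subset_Ici.2 zero_le_two)
    (convex_Ici 2)).convexOn, fun x hx => ?_, fun x hx => ⟨fun hI => ?_, ?_⟩⟩
  · rcases eq_or_ne x (γ + 1 / γ) with rfl | hxc
    · exact (rateFunction.apply_center γ).ge
    · exact (rateFunction.pos hγ (hx0 hx) hxc).le
  · by_contra hxc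
    exact (rateFunction.pos hγ (hx0 hx) hxc).ne' hI
  · rintro rfl
    exact rateFunction.apply_center γ
end

section
/- Fix integers k ≥ 3 and p ≥ 3 and a real η > 0, and define h: (0, ∞) → ℝ by h(x) = 2p(p/k)^{2/(k−2)} η x^{(2k−2)/(k−2)} − 2p x² + 1. Then h attains its minimum on (0, ∞) at x_min = (k/p)·((k − 2)/((k − 1)η))^{(k−2)/2}, and h(x_min) > 0 if and only if η > η_c, where η_c = (k − 2)·(2k²/(p(k − 1)^{k−1}))^{1/(k−2)}. In particular, h has a zero in (0, ∞) if and only if η ≤ η_c. -/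
/-!
Substituting `t = x²` turns `h` into `a t^r - 2P t + 1` with `r = (K-1)/(K-2) > 1`, a convex
function of `t`. Bernoulli's inequality, i.e. the tangent line at the point where
`a r t^(r-1) = 2P`, shows that this point, `t = xmin²`, is the minimum. There the value
simplifies to `1 - (ηc/η)^(K-2)`, which gives the sign criterion; when that value is `≤ 0`, the
intermediate value theorem on `[0, xmin]` gives a zero, because `h 0 = 1`.
-/

open Real Set

theorem isMinOn_mul_rpow_sub_mul {a b r t₀ : ℝ} (ha : 0 ≤ a) (hr : 1 ≤ r) (ht₀ : 0 < t₀)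
    (hcrit : a * r * t₀ ^ (r - 1) = b) :
    IsMinOn (fun t => a * t ^ r - b * t) (Ici 0) t₀ := by
  intro t (ht : 0 ≤ t)
  have hbern : 1 + r * (t / t₀ - 1) ≤ t ^ r / t₀ ^ r := by
    have hs : -1 ≤ t / t₀ - 1 := by linarith [div_nonneg ht ht₀.le]
    simpa only [add_sub_cancel, div_rpow ht ht₀.le] using one_add_mul_self_le_rpow_one_add hs hr
  have hpow : t₀ ^ r = t₀ ^ (r - 1) * t₀ := by rw [← rpow_add_one ht₀.ne', sub_add_cancel]
  show a * t₀ ^ r - b * t₀ ≤ a * t ^ r - b * t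
  calc a * t₀ ^ r - b * t₀ = a * t₀ ^ r * (1 + r * (t / t₀ - 1)) - b * t := by
        rw [← hcrit, hpow]; field_simp; ring
    _ ≤ a * t₀ ^ r * (t ^ r / t₀ ^ r) - b * t := by gcongr
    _ = a * t ^ r - b * t := by field_simp

theorem mul_rpow_sub_mul_eq_of_critical {a b r t₀ : ℝ} (hr : r ≠ 0) (ht₀ : 0 < t₀)
    (hcrit : a * r * t₀ ^ (r - 1) = b) :
    a * t₀ ^ r - b * t₀ = (1 / r - 1) * b * t₀ := by
  have hpow : t₀ ^ r = t₀ ^ (r - 1) * t₀ := by rw [← rpow_add_one ht₀.ne', sub_add_cancel]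
  rw [← hcrit, hpow]
  field_simp

theorem sq_mul_rpow_div_two {y : ℝ} (hy : 0 ≤ y) (c s : ℝ) :
    (c * y ^ (s / 2)) ^ 2 = c ^ 2 * y ^ s := by
  rw [mul_pow, ← rpow_mul_natCast hy]; norm_num

noncomputable def hFun (K P η x : ℝ) : ℝ :=
  2 * P * (P / K) ^ ((2 : ℝ) / (K - 2)) * η * x ^ ((2 * K - 2) / (K - 2)) - 2 * P * x ^ 2 + 1

noncomputable def xMin (K P η : ℝ) : ℝ := (K / P) * ((K - 2) / ((K - 1) * η)) ^ ((K - 2) / 2)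

noncomputable def etaCrit (K P : ℝ) : ℝ :=
  (K - 2) * (2 * K ^ 2 / (P * (K - 1) ^ (K - 1))) ^ ((1 : ℝ) / (K - 2))

section

variable {K P η : ℝ}

theorem hFun_eq {x : ℝ} (hx : 0 ≤ x) :
    hFun K P η x = 2 * P * (P / K) ^ ((2 : ℝ) / (K - 2)) * η * (x ^ 2) ^ ((K - 1) / (K - 2))
      - 2 * P * x ^ 2 + 1 := by
  rw [hFun, ← rpow_natCast_mul hx]
  congr 4
  ring

theorem continuous_hFun (hK : 2 < K) : Continuous (hFun K P η) := by
  have hq : 0 ≤ (2 * K - 2) / (K - 2) := div_nonneg (by linarith) (by linarith)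
  unfold hFun
  fun_prop (disch := exact hq)

theorem hFun_zero (hK : 2 < K) : hFun K P η 0 = 1 := by
  have hq : (2 * K - 2) / (K - 2) ≠ 0 := (div_pos (by linarith) (by linarith)).ne'
  simp [hFun, zero_rpow hq]

theorem xMin_pos (hK : 2 < K) (hP : 0 < P) (hη : 0 < η) : 0 < xMin K P η := by
  have : 0 < (K - 2) / ((K - 1) * η) := div_pos (by linarith) (mul_pos (by linarith) hη)
  unfold xMin
  positivity

theorem xMin_sq (hK : 2 < K) (hη : 0 < η) :
    xMin K P η ^ 2 = (K / P) ^ 2 * ((K - 2) / ((K - 1) * η)) ^ (K - 2) :=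
  sq_mul_rpow_div_two (div_nonneg (by linarith) (mul_nonneg (by linarith) hη.le)) _ _

theorem xMin_sq_rpow (hK : 2 < K) (hP : 0 < P) (hη : 0 < η) :
    (xMin K P η ^ 2) ^ ((1 : ℝ) / (K - 2)) =
      (K / P) ^ ((2 : ℝ) / (K - 2)) * ((K - 2) / ((K - 1) * η)) := by
  have hD : 0 ≤ (K - 2) / ((K - 1) * η) :=
    div_nonneg (by linarith) (mul_nonneg (by linarith) hη.le)
  rw [xMin_sq hK hη, mul_rpow (by positivity) (rpow_nonneg hD _),
    ← rpow_natCast_mul (by positivity), ← rpow_mul hD, mul_one_div_cancel (by linarith),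
    rpow_one]
  norm_num [div_eq_mul_one_div (2 : ℝ)]

theorem xMin_sq_critical (hK : 2 < K) (hP : 0 < P) (hη : 0 < η) :
    2 * P * (P / K) ^ ((2 : ℝ) / (K - 2)) * η * ((K - 1) / (K - 2)) *
      (xMin K P η ^ 2) ^ ((K - 1) / (K - 2) - 1) = 2 * P := by
  have : K - 2 ≠ 0 := by linarith
  have : K - 1 ≠ 0 := by linarith
  have hr : (K - 1) / (K - 2) - 1 = 1 / (K - 2) := by field_simp; ring
  have hinv : (P / K) ^ ((2 : ℝ) / (K - 2)) * (K / P) ^ ((2 : ℝ) / (K - 2)) = 1 := by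
    rw [← mul_rpow (by positivity) (by positivity),
      div_mul_div_cancel₀ (by linarith : (0 : ℝ) < K).ne', div_self hP.ne', one_rpow]
  rw [hr, xMin_sq_rpow hK hP hη]
  field_simp
  exact hinv

theorem two_mul_xMin_sq_div (hK : 2 < K) (hP : 0 < P) (hη : 0 < η) :
    2 * P * xMin K P η ^ 2 / (K - 1) = (etaCrit K P / η) ^ (K - 2) := by
  have he : 0 < K - 2 := by linarith
  have hK1 : 0 < K - 1 := by linarith
  have hC : 0 ≤ 2 * K ^ 2 / (P * (K - 1) ^ (K - 1)) := by positivity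
  have hpow : (K - 1) ^ (K - 1) = (K - 1) ^ (K - 2) * (K - 1) := by
    rw [← rpow_add_one hK1.ne']; ring_nf
  rw [xMin_sq hK hη, etaCrit, div_rpow (by positivity) hη.le, mul_rpow he.le (by positivity),
    ← rpow_mul hC, one_div_mul_cancel he.ne', rpow_one, div_rpow he.le (by positivity),
    mul_rpow hK1.le hη.le, hpow]
  have : 0 < (K - 1) ^ (K - 2) := by positivity
  have : 0 < η ^ (K - 2) := by positivity
  field_simp

theorem isMinOn_hFun (hK : 2 < K) (hP : 0 < P) (hη : 0 < η) :
    IsMinOn (hFun K P η) (Ici 0) (xMin K P η) := by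
  have hr : 1 ≤ (K - 1) / (K - 2) := by rw [le_div_iff₀ (by linarith)]; linarith
  have hmin := isMinOn_mul_rpow_sub_mul (by positivity) hr (pow_pos (xMin_pos hK hP hη) 2)
    (xMin_sq_critical hK hP hη)
  refine isMinOn_iff.2 fun x (hx : 0 ≤ x) => ?_
  have := isMinOn_iff.1 hmin (x ^ 2) (sq_nonneg x)
  rw [hFun_eq hx, hFun_eq (xMin_pos hK hP hη).le]
  linarith

theorem hFun_xMin (hK : 2 < K) (hP : 0 < P) (hη : 0 < η) :
    hFun K P η (xMin K P η) = 1 - (etaCrit K P / η) ^ (K - 2) := by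
  have : K - 2 ≠ 0 := by linarith
  have : K - 1 ≠ 0 := by linarith
  rw [hFun_eq (xMin_pos hK hP hη).le, ← two_mul_xMin_sq_div hK hP hη,
    mul_rpow_sub_mul_eq_of_critical (by positivity) (pow_pos (xMin_pos hK hP hη) 2)
      (xMin_sq_critical hK hP hη)]
  field_simp
  ring

theorem etaCrit_nonneg (hK : 2 < K) (hP : 0 < P) : 0 ≤ etaCrit K P := by
  have : 0 < K - 2 := by linarith
  have : 0 < K - 1 := by linarith
  unfold etaCrit
  positivity

theorem hFun_xMin_pos_iff (hK : 2 < K) (hP : 0 < P) (hη : 0 < η) :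
    0 < hFun K P η (xMin K P η) ↔ etaCrit K P < η := by
  rw [hFun_xMin hK hP hη, sub_pos, rpow_lt_one_iff' (div_nonneg (etaCrit_nonneg hK hP) hη.le)
    (by linarith), div_lt_one hη]

theorem exists_hFun_eq_zero_iff (hK : 2 < K) (hP : 0 < P) (hη : 0 < η) :
    (∃ x, 0 < x ∧ hFun K P η x = 0) ↔ η ≤ etaCrit K P := by
  constructor
  · rintro ⟨x, hx, hzero⟩
    by_contra! hlt
    have := isMinOn_iff.1 (isMinOn_hFun hK hP hη) x hx.le
    linarith [(hFun_xMin_pos_iff hK hP hη).2 hlt]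
  · intro hle
    have hneg : hFun K P η (xMin K P η) ≤ 0 :=
      not_lt.1 fun hpos => hle.not_gt ((hFun_xMin_pos_iff hK hP hη).1 hpos)
    obtain ⟨x, hx, hzero⟩ := intermediate_value_Icc' (xMin_pos hK hP hη).le
      (continuous_hFun hK).continuousOn ⟨hneg, (hFun_zero hK).ge.trans' zero_le_one⟩
    refine ⟨x, hx.1.lt_of_ne ?_, hzero⟩
    rintro rfl
    simp [hFun_zero hK] at hzero

end

/-- For integers `k, p ≥ 3` and `η > 0`, the function
`h(x) = 2p(p/k)^{2/(k-2)} η x^{(2k-2)/(k-2)} - 2p x² + 1` attains its minimum on `(0,∞)`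
at `x_min = (k/p)((k-2)/((k-1)η))^{(k-2)/2}`, and `h(x_min) > 0` iff `η > η_c` where
`η_c = (k-2)(2k²/(p(k-1)^{k-1}))^{1/(k-2)}`; in particular `h` has a zero in `(0,∞)`
iff `η ≤ η_c`. -/
theorem h_min_and_zero (k p : ℕ) (hk : 3 ≤ k) (hp : 3 ≤ p) (η : ℝ) (hη : 0 < η) :
    let K : ℝ := (k : ℝ)
    let P : ℝ := (p : ℝ)
    let h : ℝ → ℝ := fun x =>
      2 * P * (P / K) ^ ((2 : ℝ) / (K - 2)) * η * x ^ ((2 * K - 2) / (K - 2))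
        - 2 * P * x ^ 2 + 1
    let xmin : ℝ := (K / P) * ((K - 2) / ((K - 1) * η)) ^ ((K - 2) / 2)
    let ηc : ℝ := (K - 2) * (2 * K ^ 2 / (P * (K - 1) ^ (K - 1))) ^ ((1 : ℝ) / (K - 2))
    (∀ x : ℝ, 0 < x → h xmin ≤ h x) ∧ (0 < h xmin ↔ ηc < η) ∧
      ((∃ x : ℝ, 0 < x ∧ h x = 0) ↔ η ≤ ηc) := by
  intro K P h xmin ηc
  have hK : 2 < K := by
    have : (3 : ℝ) ≤ (k : ℝ) := by exact_mod_cast hk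
    linarith
  have hP : 0 < P := by
    have : (3 : ℝ) ≤ (p : ℝ) := by exact_mod_cast hp
    linarith
  exact ⟨fun x hx => isMinOn_iff.1 (isMinOn_hFun hK hP hη) x hx.le,
    hFun_xMin_pos_iff hK hP hη, exists_hFun_eq_zero_iff hK hP hη⟩
end
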